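/- arXiv:2008.13728 — 3 statements merged into one kernel-verified Lean document; each statement's English description precedes it below -/
import Mathlib

section
/- For any two k-dimensional linear subspaces S, T of R^{n+1}, identified with their orthogonal projection operators, the Hilbert-Schmidt inner product satisfies 0 ≤ k - S·T = S^⊥·T ≤ k‖S-T‖², where S^⊥ = I - S, ‖·‖ is the operator norm, and S·T = trace(Sᵗ∘T). -/
/-!
Put `P = 1 - S`. For symmetric idempotents `P, T` and an orthonormal basis `(eᵢ)`,
`tr (P T) = tr (T P P T) = ∑ ‖P T eᵢ‖²`, so `k - tr (S T) = tr T - tr (S T) = tr (P T) ≥ 0`.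
Since `T² = T`, `P T = (T - S) T`, whence `‖P T eᵢ‖ ≤ ‖S - T‖ ‖T eᵢ‖`; summing and using
`∑ ‖T eᵢ‖² = tr T = k` gives the upper bound.
-/

open scoped RealInnerProductSpace

noncomputable def clmTrace {n : ℕ} (A : EuclideanSpace ℝ (Fin (n+1)) →L[ℝ] EuclideanSpace ℝ (Fin (n+1))) : ℝ :=
  LinearMap.trace ℝ (EuclideanSpace ℝ (Fin (n+1))) (A : EuclideanSpace ℝ (Fin (n+1)) →ₗ[ℝ] EuclideanSpace ℝ (Fin (n+1)))

open LinearMap (trace)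

variable {E ι : Type*} [NormedAddCommGroup E] [InnerProductSpace ℝ E]

namespace LinearMap.IsSymmetricProjection

theorem one_sub {p : E →ₗ[ℝ] E} (hp : p.IsSymmetricProjection) :
    (1 - p).IsSymmetricProjection :=
  ⟨hp.isIdempotentElem.one_sub, IsSymmetric.sub (fun _ _ ↦ rfl) hp.isSymmetric⟩

theorem trace_mul_eq_sum_norm_sq [Fintype ι] {p q : E →ₗ[ℝ] E} (hp : p.IsSymmetricProjection)
    (hq : q.IsSymmetricProjection) (b : OrthonormalBasis ι ℝ E) :
    trace ℝ E (p * q) = ∑ i, ‖p (q (b i))‖ ^ 2 := by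
  have hcyc : trace ℝ E (p * q) = trace ℝ E (q * p * p * q) :=
    calc trace ℝ E (p * q) = trace ℝ E (q * p) := trace_mul_comm ..
      _ = trace ℝ E (q * (q * p * p)) := by
        rw [mul_assoc q p p, hp.isIdempotentElem.eq, ← mul_assoc, hq.isIdempotentElem.eq]
      _ = trace ℝ E (q * p * p * q) := trace_mul_comm ..
  rw [hcyc, trace_eq_sum_inner _ b]
  refine Finset.sum_congr rfl fun i _ ↦ ?_
  simp only [Module.End.mul_apply]
  rw [← hq.isSymmetric, ← hp.isSymmetric, real_inner_comm, real_inner_self_eq_norm_sq]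

theorem trace_eq_sum_norm_sq [Fintype ι] {q : E →ₗ[ℝ] E} (hq : q.IsSymmetricProjection)
    (b : OrthonormalBasis ι ℝ E) :
    trace ℝ E q = ∑ i, ‖q (b i)‖ ^ 2 := by
  simpa using trace_mul_eq_sum_norm_sq ⟨IsIdempotentElem.one, fun _ _ ↦ rfl⟩ hq b

end LinearMap.IsSymmetricProjection

namespace ContinuousLinearMap

variable {p q : E →L[ℝ] E}

theorem coe_one_sub_comp : ((1 - p).comp q : E →ₗ[ℝ] E) = (1 - p : E →ₗ[ℝ] E) * q := rfl

variable [FiniteDimensional ℝ E]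

theorem trace_one_sub_comp_nonneg (hp : (p : E →ₗ[ℝ] E).IsSymmetricProjection)
    (hq : (q : E →ₗ[ℝ] E).IsSymmetricProjection) : 0 ≤ trace ℝ E ((1 - p).comp q) := by
  rw [coe_one_sub_comp, hp.one_sub.trace_mul_eq_sum_norm_sq hq (stdOrthonormalBasis ℝ E)]
  positivity

theorem trace_one_sub_comp_le (hp : (p : E →ₗ[ℝ] E).IsSymmetricProjection)
    (hq : (q : E →ₗ[ℝ] E).IsSymmetricProjection) :
    trace ℝ E ((1 - p).comp q) ≤ trace ℝ E q * ‖p - q‖ ^ 2 := by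
  let b := stdOrthonormalBasis ℝ E
  rw [coe_one_sub_comp, hp.one_sub.trace_mul_eq_sum_norm_sq hq b, hq.trace_eq_sum_norm_sq b,
    Finset.sum_mul]
  gcongr with i
  have hdiff : (1 - p : E →ₗ[ℝ] E) (q (b i)) = (q - p) (q (b i)) := by
    have hqq : q (q (b i)) = q (b i) := congr($(hq.isIdempotentElem.eq) (b i))
    simp [hqq]
  calc ‖(1 - p : E →ₗ[ℝ] E) (q (b i))‖ ^ 2 = ‖(q - p) (q (b i))‖ ^ 2 := by rw [hdiff]
    _ ≤ (‖q - p‖ * ‖q (b i)‖) ^ 2 := by gcongr; exact (q - p).le_opNorm _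
    _ = ‖q (b i)‖ ^ 2 * ‖p - q‖ ^ 2 := by rw [norm_sub_rev]; ring

end ContinuousLinearMap

theorem stmt0_general (n k : ℕ)
    (S T : EuclideanSpace ℝ (Fin (n+1)) →L[ℝ] EuclideanSpace ℝ (Fin (n+1)))
    (hSidem : S.comp S = S) (hSsym : ∀ v w, ⟪S v, w⟫ = ⟪v, S w⟫)
    (hTidem : T.comp T = T) (hTsym : ∀ v w, ⟪T v, w⟫ = ⟪v, T w⟫)
    (hTrank : clmTrace T = k) :
    0 ≤ (k : ℝ) - clmTrace (S.comp T) ∧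
      (k : ℝ) - clmTrace (S.comp T) = clmTrace ((1 - S).comp T) ∧
      (k : ℝ) - clmTrace (S.comp T) ≤ (k : ℝ) * ‖S - T‖ ^ 2 := by
  have hS : (S : EuclideanSpace ℝ (Fin (n+1)) →ₗ[ℝ] _).IsSymmetricProjection :=
    ⟨ContinuousLinearMap.isIdempotentElem_toLinearMap_iff.mpr hSidem, hSsym⟩
  have hT : (T : EuclideanSpace ℝ (Fin (n+1)) →ₗ[ℝ] _).IsSymmetricProjection :=
    ⟨ContinuousLinearMap.isIdempotentElem_toLinearMap_iff.mpr hTidem, hTsym⟩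
  have hdefect : (k : ℝ) - clmTrace (S.comp T) = clmTrace ((1 - S).comp T) := by
    rw [← hTrank, clmTrace, clmTrace, clmTrace, ContinuousLinearMap.sub_comp,
      ContinuousLinearMap.toLinearMap_sub, map_sub]
    rfl
  rw [hdefect, ← hTrank]
  exact ⟨ContinuousLinearMap.trace_one_sub_comp_nonneg hS hT, rfl,
    ContinuousLinearMap.trace_one_sub_comp_le hS hT⟩

/-- For orthogonal projections `S, T` onto `k`-dimensional subspaces of `ℝ^{n+1}`,
`0 ≤ k - S·T = S^⊥·T ≤ k ‖S-T‖²`, where `·` is the Hilbert–Schmidt inner product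
(for symmetric maps, `S·T = trace (S ∘ T)`) and `‖·‖` the operator norm. -/
theorem stmt0 (n k : ℕ) (hk : 1 ≤ k) (hkn : k ≤ n + 1)
    (S T : EuclideanSpace ℝ (Fin (n+1)) →L[ℝ] EuclideanSpace ℝ (Fin (n+1)))
    (hSidem : S.comp S = S) (hSsym : ∀ v w, ⟪S v, w⟫ = ⟪v, S w⟫)
    (hSrank : clmTrace S = k)
    (hTidem : T.comp T = T) (hTsym : ∀ v w, ⟪T v, w⟫ = ⟪v, T w⟫)
    (hTrank : clmTrace T = k) :
    0 ≤ (k : ℝ) - clmTrace (S.comp T) ∧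
      (k : ℝ) - clmTrace (S.comp T) = clmTrace ((1 - S).comp T) ∧
      (k : ℝ) - clmTrace (S.comp T) ≤ (k : ℝ) * ‖S - T‖ ^ 2 :=
  stmt0_general n k S T hSidem hSsym hTidem hTsym hTrank
end

section
/- Define g: R^{n+1} → R^{n+1} piecewise (with δ = 1/5, writing x = (x', x_{n+1}) ∈ R^n × R) by: for |x'| ≤ 1, g(x', x_{n+1}) = (x', x_{n+1}) if |x_{n+1}| ≥ δ, (x', 0) if |x_{n+1}| ≤ δ/2, (x', 2x_{n+1} - δ) if δ/2 ≤ x_{n+1} ≤ δ, (x', 2x_{n+1} + δ) if -δ ≤ x_{n+1} ≤ -δ/2; for 1 ≤ |x'| ≤ 1+δ, g(x', x_{n+1}) = (x', x_{n+1}) if |x_{n+1}| ≥ δ or |x_{n+1}| ≤ |x'|-1, (x', |x'|-1) if |x'|-1 ≤ x_{n+1} ≤ (|x'|-1)/2 + δ/2, (x', 2x_{n+1} - δ) if (|x'|-1)/2 + δ/2 ≤ x_{n+1} ≤ δ, (x', 1-|x'|) if (1-|x'|)/2 - δ/2 ≤ x_{n+1} ≤ 1-|x'|, (x', 2x_{n+1}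 + δ) if -δ ≤ x_{n+1} ≤ (1-|x'|)/2 - δ/2; and g(x', x_{n+1}) = (x', x_{n+1}) if |x'| > 1+δ. Then g is well-defined (the pieces agree on overlaps) and is Lipschitz with Lipschitz constant at most 2. -/
noncomputable def phiAux (a t : ℝ) : ℝ :=
  max (min t (max a (2*t - 1/5))) (min (-a) (2*t + 1/5))

lemma phiAux_min_le {a t : ℝ} (ha0 : 0 ≤ a) (ha : a ≤ 1/5) (ht : t ≤ -(1/5) ∨ -a ≤ t) :
    min (-a) (2*t + 1/5) ≤ t := by
  rcases ht with ht | ht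
  · exact (min_le_right _ _).trans (by linarith)
  · exact (min_le_left _ _).trans ht

lemma phiAux_self {a t : ℝ} (ha0 : 0 ≤ a) (ha : a ≤ 1/5)
    (h : 1/5 ≤ |t| ∨ |t| ≤ a) : phiAux a t = t := by
  unfold phiAux
  rcases le_total 0 t with ht | ht
  · rw [abs_of_nonneg ht] at h
    have h1 : min (-a) (2*t + 1/5) ≤ t := min_le_of_left_le (by linarith)
    rcases h with h | h
    · rw [max_eq_right (show a ≤ 2*t - 1/5 by linarith),
        min_eq_left (show t ≤ 2*t - 1/5 by linarith), max_eq_left h1]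
    · rw [max_eq_left (show 2*t - 1/5 ≤ a by linarith), min_eq_left h, max_eq_left h1]
  · rw [abs_of_nonpos ht] at h
    rw [max_eq_left (show 2*t - 1/5 ≤ a by linarith),
      min_eq_left (show t ≤ a by linarith)]
    refine max_eq_left (phiAux_min_le ha0 ha ?_)
    rcases h with h | h
    · exact Or.inl (by linarith)
    · exact Or.inr (by linarith)

lemma phiAux_eq_a {a t : ℝ} (ha0 : 0 ≤ a) (ha : a ≤ 1/5)
    (h1 : a ≤ t) (h2 : t ≤ (a + 1/5)/2) : phiAux a t = a := by
  unfold phiAux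
  rw [max_eq_left (show 2*t - 1/5 ≤ a by linarith), min_eq_right h1]
  exact max_eq_left (min_le_of_left_le (by linarith))

lemma phiAux_eq_neg_a {a t : ℝ} (ha0 : 0 ≤ a) (ha : a ≤ 1/5)
    (h1 : -((a + 1/5)/2) ≤ t) (h2 : t ≤ -a) : phiAux a t = -a := by
  unfold phiAux
  rw [max_eq_left (show 2*t - 1/5 ≤ a by linarith),
    min_eq_left (show t ≤ a by linarith),
    min_eq_left (show -a ≤ 2*t + 1/5 by linarith)]
  exact max_eq_right h2

lemma phiAux_eq_two_sub {a t : ℝ} (ha0 : 0 ≤ a) (ha : a ≤ 1/5)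
    (h1 : (a + 1/5)/2 ≤ t) (h2 : t ≤ 1/5) : phiAux a t = 2*t - 1/5 := by
  unfold phiAux
  rw [max_eq_right (show a ≤ 2*t - 1/5 by linarith),
    min_eq_right (show 2*t - 1/5 ≤ t by linarith)]
  exact max_eq_left (min_le_of_left_le (by linarith))

lemma phiAux_eq_two_add {a t : ℝ} (ha0 : 0 ≤ a) (ha : a ≤ 1/5)
    (h1 : -(1/5) ≤ t) (h2 : t ≤ -((a + 1/5)/2)) : phiAux a t = 2*t + 1/5 := by
  unfold phiAux
  rw [max_eq_left (show 2*t - 1/5 ≤ a by linarith),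
    min_eq_left (show t ≤ a by linarith),
    min_eq_right (show 2*t + 1/5 ≤ -a by linarith)]
  exact max_eq_right (by linarith)

lemma phiAux_lip (a1 a2 t1 t2 : ℝ) :
    (phiAux a1 t1 - phiAux a2 t2)^2 ≤ (a1 - a2)^2 + 4*(t1 - t2)^2 := by
  have e1 : |(2*t1 - 1/5) - (2*t2 - 1/5)| = 2*|t1 - t2| := by
    rw [show (2*t1 - 1/5) - (2*t2 - 1/5) = 2*(t1 - t2) by ring, abs_mul]
    norm_num
  have e2 : |(2*t1 + 1/5) - (2*t2 + 1/5)| = 2*|t1 - t2| := by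
    rw [show (2*t1 + 1/5) - (2*t2 + 1/5) = 2*(t1 - t2) by ring, abs_mul]
    norm_num
  set M := max (|a1 - a2|) (2*|t1 - t2|) with hM
  have hmaxin : |max a1 (2*t1 - 1/5) - max a2 (2*t2 - 1/5)| ≤ M := by
    refine (abs_max_sub_max_le_max _ _ _ _).trans ?_
    rw [e1]
  have hmin1 : |min t1 (max a1 (2*t1 - 1/5)) - min t2 (max a2 (2*t2 - 1/5))| ≤ M := by
    refine (abs_min_sub_min_le_max _ _ _ _).trans ?_
    exact max_le ((le_max_right _ _).trans' (by nlinarith [abs_nonneg (t1 - t2)])) hmaxin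
  have hmin2 : |min (-a1) (2*t1 + 1/5) - min (-a2) (2*t2 + 1/5)| ≤ M := by
    refine (abs_min_sub_min_le_max _ _ _ _).trans ?_
    rw [e2, show -a1 - -a2 = -(a1 - a2) by ring, abs_neg]
  have h : |phiAux a1 t1 - phiAux a2 t2| ≤ M :=
    (abs_max_sub_max_le_max _ _ _ _).trans (max_le hmin1 hmin2)
  have hM2 : M^2 ≤ (a1 - a2)^2 + 4*(t1 - t2)^2 := by
    rcases max_cases (|a1 - a2|) (2*|t1 - t2|) with ⟨hc, _⟩ | ⟨hc, _⟩ <;> rw [hM, hc] <;>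
      nlinarith [sq_abs (a1 - a2), sq_abs (t1 - t2), abs_nonneg (a1 - a2), abs_nonneg (t1 - t2)]
  calc (phiAux a1 t1 - phiAux a2 t2)^2 = |phiAux a1 t1 - phiAux a2 t2|^2 := (sq_abs _).symm
    _ ≤ M^2 := by nlinarith [abs_nonneg (phiAux a1 t1 - phiAux a2 t2), (abs_nonneg (a1-a2)).trans (le_max_left _ (2*|t1-t2|))]
    _ ≤ _ := hM2

/-- There is a well-defined map `g : ℝⁿ × ℝ → ℝⁿ × ℝ` satisfying all the piecewise formulas
(with `δ = 1/5`, writing `x = (x', x_{n+1})` and `r = |x'|`), and `g` is Lipschitz with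
Lipschitz constant at most `2` for the Euclidean metric on `ℝ^{n+1} = ℝⁿ × ℝ`
(expressed via squared Euclidean distances). -/
theorem stmt5 (n : ℕ) (hn : 1 ≤ n) :
    ∃ g : EuclideanSpace ℝ (Fin n) × ℝ → EuclideanSpace ℝ (Fin n) × ℝ,
      -- pieces for |x'| ≤ 1
      (∀ x, ‖x.1‖ ≤ 1 → (1/5 : ℝ) ≤ |x.2| → g x = x) ∧
      (∀ x, ‖x.1‖ ≤ 1 → |x.2| ≤ (1/10 : ℝ) → g x = (x.1, 0)) ∧
      (∀ x, ‖x.1‖ ≤ 1 → (1/10 : ℝ) ≤ x.2 → x.2 ≤ (1/5 : ℝ) → g x = (x.1, 2 * x.2 - 1/5)) ∧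
      (∀ x, ‖x.1‖ ≤ 1 → -(1/5 : ℝ) ≤ x.2 → x.2 ≤ -(1/10 : ℝ) → g x = (x.1, 2 * x.2 + 1/5)) ∧
      -- pieces for 1 ≤ |x'| ≤ 1 + δ
      (∀ x, 1 ≤ ‖x.1‖ → ‖x.1‖ ≤ 1 + 1/5 → ((1/5 : ℝ) ≤ |x.2| ∨ |x.2| ≤ ‖x.1‖ - 1) → g x = x) ∧
      (∀ x, 1 ≤ ‖x.1‖ → ‖x.1‖ ≤ 1 + 1/5 → ‖x.1‖ - 1 ≤ x.2 →
        x.2 ≤ (‖x.1‖ - 1)/2 + 1/10 → g x = (x.1, ‖x.1‖ - 1)) ∧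
      (∀ x, 1 ≤ ‖x.1‖ → ‖x.1‖ ≤ 1 + 1/5 → (‖x.1‖ - 1)/2 + 1/10 ≤ x.2 →
        x.2 ≤ (1/5 : ℝ) → g x = (x.1, 2 * x.2 - 1/5)) ∧
      (∀ x, 1 ≤ ‖x.1‖ → ‖x.1‖ ≤ 1 + 1/5 → (1 - ‖x.1‖)/2 - 1/10 ≤ x.2 →
        x.2 ≤ 1 - ‖x.1‖ → g x = (x.1, 1 - ‖x.1‖)) ∧
      (∀ x, 1 ≤ ‖x.1‖ → ‖x.1‖ ≤ 1 + 1/5 → -(1/5 : ℝ) ≤ x.2 →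
        x.2 ≤ (1 - ‖x.1‖)/2 - 1/10 → g x = (x.1, 2 * x.2 + 1/5)) ∧
      -- identity outside
      (∀ x, 1 + 1/5 < ‖x.1‖ → g x = x) ∧
      -- Lipschitz with constant 2 for the Euclidean metric on ℝⁿ × ℝ
      (∀ x y, ‖(g x).1 - (g y).1‖ ^ 2 + ((g x).2 - (g y).2) ^ 2 ≤
        4 * (‖x.1 - y.1‖ ^ 2 + (x.2 - y.2) ^ 2)) := by
  set A : EuclideanSpace ℝ (Fin n) × ℝ → ℝ :=
    fun x => min (1/5) (max (‖x.1‖ - 1) 0) with hA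
  have hA0 : ∀ x, 0 ≤ A x := fun x => le_min (by norm_num) (le_max_right _ _)
  have hA5 : ∀ x, A x ≤ 1/5 := fun x => min_le_left _ _
  have hAle : ∀ x, ‖x.1‖ ≤ 1 → A x = 0 := by
    intro x hx
    rw [hA]; dsimp only
    rw [max_eq_right (by linarith), min_eq_right (by norm_num)]
  have hAmid : ∀ x, 1 ≤ ‖x.1‖ → ‖x.1‖ ≤ 1 + 1/5 → A x = ‖x.1‖ - 1 := by
    intro x h1 h2
    rw [hA]; dsimp only
    rw [max_eq_left (by linarith), min_eq_right (by linarith)]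
  have hAout : ∀ x, 1 + 1/5 < ‖x.1‖ → A x = 1/5 := by
    intro x h
    rw [hA]; dsimp only
    rw [min_eq_left ((le_max_left _ _).trans' (by linarith))]
  refine ⟨fun x => (x.1, phiAux (A x) x.2), ?_, ?_, ?_, ?_, ?_, ?_, ?_, ?_, ?_, ?_, ?_⟩
  · intro x h1 h2
    dsimp only
    exact Prod.ext rfl (by
      rw [hAle x h1]; exact phiAux_self le_rfl (by norm_num) (Or.inl h2))
  · intro x h1 h2
    dsimp only; refine Prod.ext rfl ?_
    rw [hAle x h1]
    rcases le_total 0 x.2 with ht | ht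
    · rw [abs_of_nonneg ht] at h2
      exact phiAux_eq_a le_rfl (by norm_num) ht (by linarith)
    · rw [abs_of_nonpos ht] at h2
      have := phiAux_eq_neg_a (a := 0) (t := x.2) le_rfl (by norm_num) (by linarith) (by linarith)
      simpa using this
  · intro x h1 h2 h3
    dsimp only; refine Prod.ext rfl ?_
    rw [hAle x h1]
    exact phiAux_eq_two_sub le_rfl (by norm_num) (by linarith) h3
  · intro x h1 h2 h3
    dsimp only; refine Prod.ext rfl ?_
    rw [hAle x h1]
    exact phiAux_eq_two_add le_rfl (by norm_num) (by linarith) (by linarith)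
  · intro x h1 h2 h3
    dsimp only; refine Prod.ext rfl ?_
    rw [hAmid x h1 h2]
    exact phiAux_self (by linarith) (by linarith) h3
  · intro x h1 h2 h3 h4
    dsimp only; refine Prod.ext rfl ?_
    rw [hAmid x h1 h2]
    exact phiAux_eq_a (by linarith) (by linarith) h3 (by linarith)
  · intro x h1 h2 h3 h4
    dsimp only; refine Prod.ext rfl ?_
    rw [hAmid x h1 h2]
    exact phiAux_eq_two_sub (by linarith) (by linarith) (by linarith) h4
  · intro x h1 h2 h3 h4
    dsimp only; refine Prod.ext rfl ?_
    rw [hAmid x h1 h2]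
    have := phiAux_eq_neg_a (a := ‖x.1‖ - 1) (t := x.2) (by linarith) (by linarith)
      (by linarith) (by linarith)
    rw [this]; ring
  · intro x h1 h2 h3 h4
    dsimp only; refine Prod.ext rfl ?_
    rw [hAmid x h1 h2]
    exact phiAux_eq_two_add (by linarith) (by linarith) (by linarith) (by linarith)
  · intro x h
    dsimp only; refine Prod.ext rfl ?_
    rw [hAout x h]
    rcases le_total (|x.2|) (1/5) with ht | ht
    · exact phiAux_self (by norm_num) le_rfl (Or.inr ht)
    · exact phiAux_self (by norm_num) le_rfl (Or.inl ht)
  · intro x y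
    dsimp only
    have hAlip : |A x - A y| ≤ ‖x.1 - y.1‖ := by
      have h1 : |A x - A y| ≤ max (|(1:ℝ)/5 - 1/5|) (|max (‖x.1‖ - 1) 0 - max (‖y.1‖ - 1) 0|) :=
        abs_min_sub_min_le_max _ _ _ _
      have h2 : |max (‖x.1‖ - 1) 0 - max (‖y.1‖ - 1) 0| ≤ |‖x.1‖ - ‖y.1‖| := by
        refine (abs_max_sub_max_le_max _ _ _ _).trans ?_
        simp only [sub_zero, abs_zero]
        rw [show ‖x.1‖ - 1 - (‖y.1‖ - 1) = ‖x.1‖ - ‖y.1‖ by ring]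
        exact max_le le_rfl (abs_nonneg _)
      have h3 : |‖x.1‖ - ‖y.1‖| ≤ ‖x.1 - y.1‖ := abs_norm_sub_norm_le _ _
      refine h1.trans (max_le ?_ (h2.trans h3))
      simpa using norm_nonneg (x.1 - y.1)
    have hphi := phiAux_lip (A x) (A y) x.2 y.2
    have hsq : (A x - A y)^2 ≤ ‖x.1 - y.1‖^2 := by
      nlinarith [sq_abs (A x - A y), abs_nonneg (A x - A y)]
    nlinarith [norm_nonneg (x.1 - y.1)]
end

section
/- Let μ be a finite Borel measure on R^{n+1} supported in a ball B_{2R₀}, and suppose there is a constant c such that μ(B_r) ≤ c·rⁿ for all r ∈ [2ε, 2R₀] and μ(B_{2ε}) ≤ (4ε)ⁿ ω_n (Q+1), where 0 < ε ≤ R₀ and Q ≥ 1. Then for every s ∈ (0, R₀²] and R ∈ [ε, R₀], ∫ (4π(s+R²))^{-n/2} exp(-|x|²/(4(s+R²))) dμ(x) ≤ C, where C depends only on n, c, Q, R₀, and μ(B_{2R₀}) (but not on ε, s, R). Specifically, using the layer-cake formula, ∫_0^1 μ({x : exp(-|x|²/(4(s+R²))) ≥ λ}) dλ ≤ e^{-R₀²/(s+R²)}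 μ(B_{2R₀}) + c(4(s+R²))^{n/2} ∫_0^1 (log(1/λ))^{n/2} dλ + (4ε)ⁿ ω_n (Q+1). -/
/-!
Put `τ = s + R²` and `g x = exp (-‖x‖² / (4τ))`. By the layer-cake formula `∫ g dμ` equals
`∫₀¹ μ {g ≥ l} dl`, and `{g ≥ l}` is the closed ball of radius `r = √(4τ log(1/l))`.
Since `μ` vanishes outside `B_{2R₀}`, the growth bound persists for `r > 2R₀`, so
`μ(B_r) ≤ c rⁿ + (4ε)ⁿ ωₙ (Q+1)` for every `r ≥ 0`. Integrating, `c rⁿ` contributes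
`c (4τ)^{n/2} ∫₀¹ log(1/l)^{n/2}`, whose factor `(4τ)^{n/2}` cancels against the normalisation
`(4πτ)^{-n/2}`, while `(4πτ)^{-n/2} (4ε)ⁿ` stays bounded because `τ ≥ ε²`.
-/

open MeasureTheory Metric

/-- `ω_n`, the volume of the unit ball in `ℝⁿ`. -/
noncomputable def omegaN (n : ℕ) : ℝ :=
  (volume (ball (0 : EuclideanSpace ℝ (Fin n)) 1)).toReal

open Real Set

lemma pow_eq_sq_rpow {x : ℝ} (hx : 0 ≤ x) (n : ℕ) : x ^ n = (x ^ 2) ^ ((n : ℝ) / 2) := by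
  rw [← rpow_natCast_mul hx, ← rpow_natCast]
  congr 1
  push_cast
  ring

lemma sqrt_pow_eq_rpow {x : ℝ} (hx : 0 ≤ x) (n : ℕ) : √x ^ n = x ^ ((n : ℝ) / 2) := by
  rw [pow_eq_sq_rpow (sqrt_nonneg x), sq_sqrt hx]

lemma log_one_div_nonneg {l : ℝ} (h0 : 0 ≤ l) (h1 : l ≤ 1) : 0 ≤ log (1 / l) := by
  rw [one_div, log_inv, neg_nonneg]
  exact log_nonpos h0 h1

lemma intervalIntegrable_log_one_div_rpow {p : ℝ} (hp : 0 ≤ p) :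
    IntervalIntegrable (fun l : ℝ => log (1 / l) ^ p) volume 0 1 := by
  -- `log y ≤ y ^ δ / δ` bounds the integrand by `δ⁻¹ ^ p * l ^ (-δp)`, integrable as `δp < 1`
  set δ : ℝ := 1 / (2 * p + 2) with hδ_def
  have hδ : 0 < δ := by positivity
  have hδp : δ * p < 1 := by
    rw [hδ_def, one_div_mul_eq_div, div_lt_one (by positivity)]
    linarith
  have hdom : IntervalIntegrable (fun l : ℝ => δ⁻¹ ^ p * l ^ (-(δ * p))) volume 0 1 :=
    (intervalIntegral.intervalIntegrable_rpow' (by linarith)).const_mul _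
  refine hdom.mono_fun'
    ((measurable_log.comp (measurable_const.div measurable_id)).pow_const p).aestronglyMeasurable ?_
  rw [uIoc_of_le zero_le_one]
  filter_upwards [ae_restrict_mem measurableSet_Ioc] with l ⟨hl0, hl1⟩
  have hlog := log_one_div_nonneg hl0.le hl1
  rw [norm_of_nonneg (rpow_nonneg hlog p)]
  calc log (1 / l) ^ p ≤ ((1 / l) ^ δ / δ) ^ p :=
        rpow_le_rpow hlog (log_le_rpow_div (by positivity) hδ) hp
    _ = δ⁻¹ ^ p * l ^ (-(δ * p)) := by
        rw [div_eq_mul_inv, mul_comm, mul_rpow (by positivity) (by positivity),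
          ← rpow_mul (by positivity), one_div, inv_rpow hl0.le, ← rpow_neg hl0.le]

lemma setOf_le_exp_neg_sq_div_eq_closedBall {E : Type*} [SeminormedAddCommGroup E] {τ l : ℝ}
    (hτ : 0 < τ) (hl0 : 0 < l) (hl1 : l ≤ 1) :
    {x : E | l ≤ exp (-‖x‖ ^ 2 / (4 * τ))} = closedBall 0 √(4 * τ * log (1 / l)) := by
  ext x
  simp only [mem_ofPred_eq, mem_closedBall, dist_zero_right]
  rw [le_sqrt (norm_nonneg x) (mul_nonneg (by positivity) (log_one_div_nonneg hl0.le hl1)),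
    ← log_le_iff_le_exp hl0, neg_div, le_neg, div_le_iff₀ (by positivity), one_div, log_inv,
    mul_comm (4 * τ)]

lemma toReal_measure_closedBall_le_of_growth {X : Type*} [PseudoMetricSpace X] [MeasurableSpace X]
    {μ : Measure X} [IsFiniteMeasure μ] {x : X} {n : ℕ} {c r₁ r₂ B : ℝ}
    (hc : 0 ≤ c) (hr₁ : 0 ≤ r₁) (hr₁₂ : r₁ ≤ r₂) (hsupp : μ (closedBall x r₂)ᶜ = 0)
    (hgrow : ∀ r, r₁ ≤ r → r ≤ r₂ → (μ (closedBall x r)).toReal ≤ c * r ^ n)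
    (hsmall : (μ (closedBall x r₁)).toReal ≤ B) {r : ℝ} (hr : 0 ≤ r) :
    (μ (closedBall x r)).toReal ≤ c * r ^ n + B := by
  have hB : 0 ≤ B := ENNReal.toReal_nonneg.trans hsmall
  have hcr : 0 ≤ c * r ^ n := by positivity
  rcases lt_or_ge r r₁ with hrr₁ | hr₁r
  · calc (μ (closedBall x r)).toReal ≤ (μ (closedBall x r₁)).toReal :=
          ENNReal.toReal_mono (measure_ne_top μ _)
            (measure_mono (closedBall_subset_closedBall hrr₁.le))
      _ ≤ c * r ^ n + B := by linarith
  rcases le_or_gt r r₂ with hrr₂ | hr₂r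
  · linarith [hgrow r hr₁r hrr₂]
  have hμ : μ (closedBall x r) ≤ μ (closedBall x r₂) :=
    measure_mono_ae (ae_le_set.2 (measure_mono_null (fun _ hy => hy.2) hsupp))
  calc (μ (closedBall x r)).toReal ≤ (μ (closedBall x r₂)).toReal :=
        ENNReal.toReal_mono (measure_ne_top μ _) hμ
    _ ≤ c * r₂ ^ n := hgrow r₂ hr₁₂ le_rfl
    _ ≤ c * r ^ n := by gcongr; linarith
    _ ≤ c * r ^ n + B := by linarith

lemma integral_toReal_measure_superlevel_le {E : Type*} [NormedAddCommGroup E] [MeasurableSpace E]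
    {μ : Measure E} [IsFiniteMeasure μ] {n : ℕ} {c r₁ r₂ B τ : ℝ}
    (hc : 0 ≤ c) (hr₁ : 0 ≤ r₁) (hr₁₂ : r₁ ≤ r₂) (hsupp : μ (closedBall 0 r₂)ᶜ = 0)
    (hgrow : ∀ r, r₁ ≤ r → r ≤ r₂ → (μ (closedBall 0 r)).toReal ≤ c * r ^ n)
    (hsmall : (μ (closedBall 0 r₁)).toReal ≤ B) (hτ : 0 < τ) :
    ∫ l in (0 : ℝ)..1, (μ {x | l ≤ exp (-‖x‖ ^ 2 / (4 * τ))}).toReal ≤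
      c * (4 * τ) ^ ((n : ℝ) / 2) * (∫ l in (0 : ℝ)..1, log (1 / l) ^ ((n : ℝ) / 2)) + B := by
  have hF : IntervalIntegrable (fun l => (μ {x : E | l ≤ exp (-‖x‖ ^ 2 / (4 * τ))}).toReal)
      volume 0 1 :=
    Antitone.intervalIntegrable fun l₁ l₂ hl =>
      ENNReal.toReal_mono (measure_ne_top μ _) (measure_mono fun _ hx => hl.trans hx)
  have hlog := intervalIntegrable_log_one_div_rpow (p := (n : ℝ) / 2) (by positivity)
  calc ∫ l in (0 : ℝ)..1, (μ {x | l ≤ exp (-‖x‖ ^ 2 / (4 * τ))}).toReal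
      ≤ ∫ l in (0 : ℝ)..1, (c * (4 * τ) ^ ((n : ℝ) / 2) * log (1 / l) ^ ((n : ℝ) / 2) + B) := by
        refine intervalIntegral.integral_mono_on_of_le_Ioo zero_le_one hF
          ((hlog.const_mul _).add intervalIntegrable_const) fun l ⟨hl0, hl1⟩ => ?_
        have hlog0 := log_one_div_nonneg hl0.le hl1.le
        rw [setOf_le_exp_neg_sq_div_eq_closedBall hτ hl0 hl1.le,
          mul_assoc c, ← mul_rpow (by positivity) hlog0, ← sqrt_pow_eq_rpow (by positivity)]
        exact toReal_measure_closedBall_le_of_growth hc hr₁ hr₁₂ hsupp hgrow hsmall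
          (sqrt_nonneg _)
    _ = _ := by
        rw [intervalIntegral.integral_add (hlog.const_mul _) intervalIntegrable_const,
          intervalIntegral.integral_const_mul, intervalIntegral.integral_const]
        simp

lemma integral_eq_intervalIntegral_measure_le_of_le_one {α : Type*} [MeasurableSpace α]
    (μ : Measure α) [IsFiniteMeasure μ] {f : α → ℝ} (hf : AEStronglyMeasurable f μ)
    (h0 : ∀ x, 0 ≤ f x) (h1 : ∀ x, f x ≤ 1) :
    ∫ x, f x ∂μ = ∫ l in (0 : ℝ)..1, (μ {x | l ≤ f x}).toReal := by
  have hint : Integrable f μ :=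
    .of_bound hf 1 (.of_forall fun x => by rw [norm_of_nonneg (h0 x)]; exact h1 x)
  rw [hint.integral_eq_integral_Ioc_meas_le (.of_forall h0) (.of_forall h1),
    intervalIntegral.integral_of_le zero_le_one]
  rfl

lemma gaussian_normalization_mul_le (n : ℕ) {c I B ε τ : ℝ} (hε : 0 < ε) (hετ : ε ^ 2 ≤ τ)
    (hB : 0 ≤ B) :
    (4 * π * τ) ^ (-(n : ℝ) / 2) * (c * (4 * τ) ^ ((n : ℝ) / 2) * I + (4 * ε) ^ n * B) ≤
      c * π ^ (-(n : ℝ) / 2) * I + (4 * π) ^ (-(n : ℝ) / 2) * 4 ^ n * B := by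
  have hτ : 0 < τ := (pow_pos hε 2).trans_le hετ
  have hcancel : (4 * π * τ) ^ (-(n : ℝ) / 2) * (4 * τ) ^ ((n : ℝ) / 2) = π ^ (-(n : ℝ) / 2) := by
    rw [show 4 * π * τ = π * (4 * τ) by ring, mul_rpow pi_pos.le (by positivity), mul_assoc,
      ← rpow_add (by positivity), neg_div, neg_add_cancel, rpow_zero, mul_one]
  have hratio : τ ^ (-(n : ℝ) / 2) * ε ^ n ≤ 1 := by
    rw [pow_eq_sq_rpow hε.le, neg_div, rpow_neg hτ.le, inv_mul_le_one₀ (by positivity)]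
    exact rpow_le_rpow (by positivity) hετ (by positivity)
  have htail : (4 * π * τ) ^ (-(n : ℝ) / 2) * (4 * ε) ^ n =
      (4 * π) ^ (-(n : ℝ) / 2) * 4 ^ n * (τ ^ (-(n : ℝ) / 2) * ε ^ n) := by
    rw [mul_rpow (by positivity) hτ.le, mul_pow]
    ring
  calc (4 * π * τ) ^ (-(n : ℝ) / 2) * (c * (4 * τ) ^ ((n : ℝ) / 2) * I + (4 * ε) ^ n * B)
      = c * ((4 * π * τ) ^ (-(n : ℝ) / 2) * (4 * τ) ^ ((n : ℝ) / 2)) * I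
        + (4 * π * τ) ^ (-(n : ℝ) / 2) * (4 * ε) ^ n * B := by ring
    _ = c * π ^ (-(n : ℝ) / 2) * I
        + (4 * π) ^ (-(n : ℝ) / 2) * 4 ^ n * (τ ^ (-(n : ℝ) / 2) * ε ^ n) * B := by
        rw [hcancel, htail]
    _ ≤ c * π ^ (-(n : ℝ) / 2) * I + (4 * π) ^ (-(n : ℝ) / 2) * 4 ^ n * B :=
        add_le_add_right (mul_le_mul_of_nonneg_right
          (mul_le_of_le_one_right (by positivity) hratio) hB) _

theorem stmt16_general (n : ℕ) (c Q R₀ Mtot : ℝ) (hc : 0 ≤ c) (hQ : 1 ≤ Q) :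
    ∃ C : ℝ, ∀ (μ : Measure (EuclideanSpace ℝ (Fin (n+1)))) (ε s R : ℝ),
      IsFiniteMeasure μ →
      0 < ε → ε ≤ R₀ →
      μ (closedBall (0 : EuclideanSpace ℝ (Fin (n+1))) (2 * R₀))ᶜ = 0 →
      (μ Set.univ).toReal ≤ Mtot →
      (∀ r : ℝ, 2 * ε ≤ r → r ≤ 2 * R₀ →
        (μ (closedBall (0 : EuclideanSpace ℝ (Fin (n+1))) r)).toReal ≤ c * r ^ n) →
      (μ (closedBall (0 : EuclideanSpace ℝ (Fin (n+1))) (2 * ε))).toReal ≤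
        (4 * ε) ^ n * omegaN n * (Q + 1) →
      0 < s → s ≤ R₀ ^ 2 → ε ≤ R → R ≤ R₀ →
      ((∫ x, (4 * Real.pi * (s + R ^ 2)) ^ (-(n:ℝ)/2)
          * Real.exp (-‖x‖ ^ 2 / (4 * (s + R ^ 2))) ∂μ) ≤ C) ∧
      ((∫ l in (0:ℝ)..1,
          (μ {x | l ≤ Real.exp (-‖x‖ ^ 2 / (4 * (s + R ^ 2)))}).toReal) ≤
        Real.exp (-R₀ ^ 2 / (s + R ^ 2)) *
            (μ (closedBall (0 : EuclideanSpace ℝ (Fin (n+1))) (2 * R₀))).toReal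
          + c * (4 * (s + R ^ 2)) ^ ((n:ℝ)/2) *
              (∫ l in (0:ℝ)..1, (Real.log (1/l)) ^ ((n:ℝ)/2))
          + (4 * ε) ^ n * omegaN n * (Q + 1)) := by
  refine ⟨c * π ^ (-(n : ℝ) / 2) * (∫ l in (0 : ℝ)..1, log (1 / l) ^ ((n : ℝ) / 2))
      + (4 * π) ^ (-(n : ℝ) / 2) * 4 ^ n * (omegaN n * (Q + 1)), ?_⟩
  intro μ ε s R _ hε hεR₀ hsupp _ hgrow hsmall hs _ hεR _
  have hτ : 0 < s + R ^ 2 := by positivity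
  have hετ : ε ^ 2 ≤ s + R ^ 2 := by nlinarith
  have hlayer := integral_toReal_measure_superlevel_le hc (by positivity) (by linarith)
    hsupp hgrow hsmall hτ
  refine ⟨?_, ?_⟩
  · rw [integral_const_mul, integral_eq_intervalIntegral_measure_le_of_le_one μ (by fun_prop)
      (fun _ => (exp_pos _).le) (fun _ => exp_le_one_iff.2 (by
        rw [neg_div]; exact neg_nonpos.2 (by positivity)))]
    refine (mul_le_mul_of_nonneg_left hlayer (by positivity)).trans ?_
    rw [mul_assoc ((4 * ε) ^ n)]
    exact gaussian_normalization_mul_le n hε hετ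
      (mul_nonneg ENNReal.toReal_nonneg (by linarith))
  · have : 0 ≤ exp (-R₀ ^ 2 / (s + R ^ 2)) *
        (μ (closedBall (0 : EuclideanSpace ℝ (Fin (n+1))) (2 * R₀))).toReal := by positivity
    linarith

/-- Uniform Gaussian density ratio bound: for a finite measure `μ` supported in `B_{2R₀}` with
`μ(B_r) ≤ c rⁿ` for `r ∈ [2ε, 2R₀]` and `μ(B_{2ε}) ≤ (4ε)ⁿ ωₙ (Q+1)`, there is a constant `C`
depending only on `n, c, Q, R₀` and the total mass bound such that for all `s ∈ (0, R₀²]` and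
`R ∈ [ε, R₀]`, `∫ (4π(s+R²))^{-n/2} e^{-|x|²/(4(s+R²))} dμ ≤ C`; and the layer-cake bound
`∫₀¹ μ({e^{-|x|²/(4(s+R²))} ≥ λ}) dλ ≤ e^{-R₀²/(s+R²)} μ(B_{2R₀})
+ c (4(s+R²))^{n/2} ∫₀¹ (log(1/λ))^{n/2} dλ + (4ε)ⁿ ωₙ (Q+1)` holds. -/
theorem stmt16 (n : ℕ) (hn : 1 ≤ n) (c Q R₀ Mtot : ℝ)
    (hc : 0 ≤ c) (hQ : 1 ≤ Q) (hR₀ : 0 < R₀) (hMtot : 0 ≤ Mtot) :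
    ∃ C : ℝ, ∀ (μ : Measure (EuclideanSpace ℝ (Fin (n+1)))) (ε s R : ℝ),
      IsFiniteMeasure μ →
      0 < ε → ε ≤ R₀ →
      μ (closedBall (0 : EuclideanSpace ℝ (Fin (n+1))) (2 * R₀))ᶜ = 0 →
      (μ Set.univ).toReal ≤ Mtot →
      (∀ r : ℝ, 2 * ε ≤ r → r ≤ 2 * R₀ →
        (μ (closedBall (0 : EuclideanSpace ℝ (Fin (n+1))) r)).toReal ≤ c * r ^ n) →
      (μ (closedBall (0 : EuclideanSpace ℝ (Fin (n+1))) (2 * ε))).toReal ≤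
        (4 * ε) ^ n * omegaN n * (Q + 1) →
      0 < s → s ≤ R₀ ^ 2 → ε ≤ R → R ≤ R₀ →
      ((∫ x, (4 * Real.pi * (s + R ^ 2)) ^ (-(n:ℝ)/2)
          * Real.exp (-‖x‖ ^ 2 / (4 * (s + R ^ 2))) ∂μ) ≤ C) ∧
      ((∫ l in (0:ℝ)..1,
          (μ {x | l ≤ Real.exp (-‖x‖ ^ 2 / (4 * (s + R ^ 2)))}).toReal) ≤
        Real.exp (-R₀ ^ 2 / (s + R ^ 2)) *
            (μ (closedBall (0 : EuclideanSpace ℝ (Fin (n+1))) (2 * R₀))).toReal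
          + c * (4 * (s + R ^ 2)) ^ ((n:ℝ)/2) *
              (∫ l in (0:ℝ)..1, (Real.log (1/l)) ^ ((n:ℝ)/2))
          + (4 * ε) ^ n * omegaN n * (Q + 1)) :=
  stmt16_general n c Q R₀ Mtot hc hQ
end
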